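/- Let $\Theta \subseteq \mathbb{R}$, and for each $\theta \in \Theta$ let $F_\theta$ be a continuous cumulative distribution function on $\mathbb{R}$ with connected support. Fix $n \ge 1$, levels $\gamma_k = k/(n+1)$ for $k=1,\ldots,n$, and let $h^{(\theta)} := \bigl(q^{(\theta)}(\gamma_1), \ldots, q^{(\theta)}(\gamma_n)\bigr) \in \mathbb{R}^n$ denote the vector of $\gamma_k$-quantiles of $F_\theta$. Let $J : \mathbb{R}^n \to \mathbb{R}^p$ be continuous, and let $\bar\beta \in \mathbb{R}^p$ satisfy $\bar\beta^\top J(h^{(\theta)}) = \theta$ for all $\theta \in \Theta$. Let $\theta_0 \in \Theta$, and let $y_1^{(0)}, y_2^{(0)}, \ldots$ be i.i.d. with cdf $F_{\theta_0}$, with $h_N(\boldsymbol{y}_N^{(0)}) := \bigl(y^{(0)}_{(\lfloor \gamma_1 N \rfloor)}, \ldots, y^{(0)}_{(\lfloor \gamma_n N \rfloor)}\bigr)$ the vector of sample quantiles of the first $N$ observations. Then the TS estimate $\bar\theta_0^{(N)} := \bar\beta^\top J\bigl(h_N(\boldsymbol{y}_N^{(0)})\bigr)$ converges almost surely to $\theta_0$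 as $N \to \infty$ (strong consistency of the TS estimator). -/

import Mathlib

/-!
Almost surely the empirical distribution function converges to the true one at every rational
point (strong law of large numbers, countably many points). At a level `γ ∈ (0,1)` where the cdf
crosses `γ` strictly at its quantile `q`, the counting description of order statistics
(`y_(l) ≤ x` iff at least `l` observations are `≤ x`) then pins `y_(⌊γN⌋)` eventually between
any two rationals around `q`. The TS estimate is a continuous function of these sample
quantiles, so it converges to `β̄ᵀ J(h^(θ₀)) = θ₀`.
-/

open MeasureTheory ProbabilityTheory Filter Topology
open scoped Matrix

/-- `l`-th order statistic (1-indexed) of the first `N` values of `y`. -/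
noncomputable def orderStat (N : ℕ) (y : ℕ → ℝ) (l : ℕ) : ℝ :=
  (List.insertionSort (· ≤ ·) (List.ofFn fun i : Fin N => y i)).getD (l - 1) 0

/-- The `γ`-quantile of a cdf `F`: `q(γ) = inf {x | F x ≥ γ}`. -/
noncomputable def quantile (F : ℝ → ℝ) (γ : ℝ) : ℝ := sInf {x | γ ≤ F x}

/-- First-stage compression: vector of sample quantiles of `y 0, …, y (N-1)` at levels
`γ_k = (k+1)/(n+1)`, `k = 0, …, n-1` (0-indexed). -/
noncomputable def sampleQuantVec (n N : ℕ) (y : ℕ → ℝ) : Fin n → ℝ :=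
  fun k => orderStat N y ⌊(((k : ℕ) + 1 : ℝ) / (n + 1)) * N⌋₊

/-- Vector of true quantiles `h^(θ) = (q^(θ)(γ_1), …, q^(θ)(γ_n))` of the cdf `F θ`. -/
noncomputable def quantVec (F : ℝ → ℝ → ℝ) (n : ℕ) (θ : ℝ) : Fin n → ℝ :=
  fun k => quantile (F θ) (((k : ℕ) + 1 : ℝ) / (n + 1))

open Finset

noncomputable def empiricalCDF (N : ℕ) (y : ℕ → ℝ) (x : ℝ) : ℝ :=
  #{i ∈ range N | y i ≤ x} / N

theorem List.countP_ofFn {α : Type*} {n : ℕ} (f : Fin n → α) (p : α → Bool) :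
    (List.ofFn f).countP p = #{i | p (f i)} := by
  induction n with
  | zero => simp
  | succ m ih =>
    rw [List.ofFn_succ, List.countP_cons, ih, card_filter, card_filter, Fin.sum_univ_succ]
    omega

theorem Monotone.le_iff_lt_card_filter {α : Type*} [LinearOrder α] {L : ℕ} {g : Fin L → α}
    (hg : Monotone g) (i : Fin L) (x : α) : g i ≤ x ↔ (i : ℕ) < #{j | g j ≤ x} := by
  constructor
  · intro hix
    calc (i : ℕ) < #(Iic i) := by simp
      _ ≤ #{j | g j ≤ x} := card_le_card fun j hj => by
        simp only [mem_Iic] at hj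
        simpa using (hg hj).trans hix
  · intro hcard
    by_contra! hxi
    have hsub : filter (fun j => g j ≤ x) univ ⊆ Iio i := fun j hj => by
      simp only [mem_filter, mem_univ, true_and] at hj
      simpa using lt_of_not_ge fun hij => (hxi.trans_le (hg hij)).not_ge hj
    have := card_le_card hsub
    simp only [Fin.card_Iio] at this
    omega

theorem Fin.card_filter_val_eq_card_filter_range (p : ℕ → Prop) [DecidablePred p] (N : ℕ) :
    #{i : Fin N | p i} = #{i ∈ range N | p i} := by
  rw [card_filter, card_filter, Fin.sum_univ_eq_sum_range (fun i => if p i then 1 else 0)]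

theorem orderStat_le_iff {N : ℕ} {y : ℕ → ℝ} {l : ℕ} (hl1 : 1 ≤ l) (hlN : l ≤ N) (x : ℝ) :
    orderStat N y l ≤ x ↔ l ≤ #{i ∈ range N | y i ≤ x} := by
  unfold orderStat
  set s := List.insertionSort (· ≤ ·) (List.ofFn fun i : Fin N => y i)
  have hperm : s.Perm (List.ofFn fun i : Fin N => y i) := List.perm_insertionSort _ _
  have hlen : s.length = N := by rw [hperm.length_eq, List.length_ofFn]
  have hcount : #{j | s.get j ≤ x} = #{i ∈ range N | y i ≤ x} := by
    rw [← Fin.card_filter_val_eq_card_filter_range]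
    have := hperm.countP_eq (fun v => decide (v ≤ x))
    rw [← List.ofFn_get s, List.countP_ofFn, List.countP_ofFn] at this
    simpa only [decide_eq_true_eq] using this
  have hsorted : s.SortedLE := List.sortedLE_insertionSort
  have hl : l - 1 < s.length := by omega
  rw [List.getD_eq_getElem _ _ hl, ← hcount]
  exact (hsorted.le_iff_lt_card_filter ⟨l - 1, hl⟩ x).trans (by dsimp only; omega)

theorem card_filter_range_le (N : ℕ) (y : ℕ → ℝ) (x : ℝ) : #{i ∈ range N | y i ≤ x} ≤ N :=
  (card_filter_le _ _).trans (card_range N).le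

theorem natCast_pos_of_one_le_mul {γ : ℝ} {N : ℕ} (hγN : 1 ≤ γ * N) : (0 : ℝ) < N :=
  Nat.cast_pos.2 (Nat.pos_of_ne_zero fun hN => by simp [hN] at hγN; linarith)

theorem one_le_floor_of_one_le {γ : ℝ} {N : ℕ} (hγN : 1 ≤ γ * N) : 1 ≤ ⌊γ * N⌋₊ :=
  Nat.le_floor (by exact_mod_cast hγN)

theorem orderStat_floor_le_of_lt_empiricalCDF {N : ℕ} {y : ℕ → ℝ} {γ x : ℝ}
    (hγN : 1 ≤ γ * N) (h : γ < empiricalCDF N y x) : orderStat N y ⌊γ * N⌋₊ ≤ x := by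
  have hN := natCast_pos_of_one_le_mul hγN
  have hcount : γ * N < #{i ∈ range N | y i ≤ x} := (lt_div_iff₀ hN).1 h
  have hl : (⌊γ * N⌋₊ : ℝ) < #{i ∈ range N | y i ≤ x} :=
    (Nat.floor_le (by linarith)).trans_lt hcount
  have hl' : ⌊γ * N⌋₊ < #{i ∈ range N | y i ≤ x} := by exact_mod_cast hl
  rw [orderStat_le_iff (one_le_floor_of_one_le hγN) (hl'.le.trans (card_filter_range_le N y x))]
  exact hl'.le

theorem lt_orderStat_floor_of_empiricalCDF_lt {N : ℕ} {y : ℕ → ℝ} {γ x : ℝ} (hγ1 : γ ≤ 1)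
    (hγN : 1 ≤ γ * N) (h : empiricalCDF N y x + 1 / N ≤ γ) : x < orderStat N y ⌊γ * N⌋₊ := by
  have hN := natCast_pos_of_one_le_mul hγN
  have hlN : ⌊γ * N⌋₊ ≤ N := Nat.floor_le_of_le (by nlinarith)
  have hcount : (#{i ∈ range N | y i ≤ x} : ℝ) + 1 ≤ γ * N := by
    rw [empiricalCDF, ← add_div, div_le_iff₀ hN] at h
    exact h
  have hl : (#{i ∈ range N | y i ≤ x} : ℝ) < ⌊γ * N⌋₊ := by
    linarith [Nat.lt_floor_add_one (γ * N)]
  rw [← not_le, orderStat_le_iff (one_le_floor_of_one_le hγN) hlN, not_le]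
  exact_mod_cast hl

theorem tendsto_orderStat_floor_mul {y : ℕ → ℝ} {G : ℝ → ℝ} {γ q : ℝ} (hγ0 : 0 < γ)
    (hγ1 : γ ≤ 1) (hcross : ∀ ε > 0, γ < G (q + ε) ∧ G (q - ε) < γ)
    (hG : ∀ r : ℚ, Tendsto (fun N => empiricalCDF N y r) atTop (𝓝 (G r))) :
    Tendsto (fun N : ℕ => orderStat N y ⌊γ * N⌋₊) atTop (𝓝 q) := by
  have hγN : ∀ᶠ N : ℕ in atTop, 1 ≤ γ * N :=
    (tendsto_natCast_atTop_atTop.const_mul_atTop hγ0).eventually_ge_atTop 1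
  refine tendsto_order.2 ⟨fun a ha => ?_, fun b hb => ?_⟩
  · obtain ⟨r, har, hrq⟩ := exists_rat_btwn ha
    have hGr : G r < γ := by simpa using (hcross (q - r) (sub_pos.2 hrq)).2
    have hF : ∀ᶠ N : ℕ in atTop, empiricalCDF N y r < (G r + γ) / 2 :=
      (hG r).eventually (eventually_lt_nhds (by linarith))
    have hinv : ∀ᶠ N : ℕ in atTop, 1 / (N : ℝ) ≤ (γ - G r) / 2 :=
      tendsto_one_div_atTop_nhds_zero_nat.eventually (eventually_le_nhds (by linarith))
    filter_upwards [hF, hinv, hγN] with N hF hinv hγN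
    exact har.trans (lt_orderStat_floor_of_empiricalCDF_lt hγ1 hγN (by linarith))
  · obtain ⟨r, hqr, hrb⟩ := exists_rat_btwn hb
    have hGr : γ < G r := by simpa using (hcross (r - q) (sub_pos.2 hqr)).1
    filter_upwards [(hG r).eventually (eventually_gt_nhds hGr), hγN] with N hF hγN
    exact (orderStat_floor_le_of_lt_empiricalCDF hγN hF).trans_lt hrb

theorem identDistrib_of_forall_measure_le_eq {Ω : Type*} [MeasurableSpace Ω] {P : Measure Ω}
    [IsFiniteMeasure P] {X Y : Ω → ℝ} (hX : Measurable X) (hY : Measurable Y)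
    (h : ∀ x, P {ω | X ω ≤ x} = P {ω | Y ω ≤ x}) : IdentDistrib X Y P P where
  aemeasurable_fst := hX.aemeasurable
  aemeasurable_snd := hY.aemeasurable
  map_eq := Measure.ext_of_Iic _ _ fun x => by
    rw [Measure.map_apply hX measurableSet_Iic, Measure.map_apply hY measurableSet_Iic]
    exact h x

theorem ae_tendsto_empiricalCDF {Ω : Type*} [MeasurableSpace Ω] {P : Measure Ω}
    [IsFiniteMeasure P] {y : ℕ → Ω → ℝ} (hmeas : ∀ i, Measurable (y i))
    (hindep : iIndepFun y P) (hlaw : ∀ i, IdentDistrib (y i) (y 0) P P) (x : ℝ) :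
    ∀ᵐ ω ∂P, Tendsto (fun N => empiricalCDF N (fun i => y i ω) x) atTop
      (𝓝 (P.real {ω | y 0 ω ≤ x})) := by
  set g : ℝ → ℝ := (Set.Iic x).indicator 1
  have hg : Measurable g := measurable_const.indicator measurableSet_Iic
  have hX0 : g ∘ y 0 = (y 0 ⁻¹' Set.Iic x).indicator 1 := by
    rfl
  have hint : Integrable (g ∘ y 0) P := by
    rw [hX0]
    exact (integrable_const 1).indicator ((hmeas 0) measurableSet_Iic)
  have hmean : P[g ∘ y 0] = P.real {ω | y 0 ω ≤ x} := by
    rw [hX0]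
    exact integral_indicator_one ((hmeas 0) measurableSet_Iic)
  filter_upwards [strong_law_ae_real (fun i => g ∘ y i) hint
    (fun i j hij => (hindep.comp (fun _ => g) fun _ => hg).indepFun hij)
    (fun i => (hlaw i).comp hg)] with ω hω
  rw [hmean] at hω
  convert hω using 2 with N
  rw [empiricalCDF, ← sum_boole]
  rfl

theorem level_mem_Ioo {n : ℕ} (k : Fin n) : (((k : ℕ) + 1 : ℝ) / (n + 1)) ∈ Set.Ioo 0 1 := by
  have hk : ((k : ℕ) : ℝ) + 1 ≤ n := by exact_mod_cast k.isLt
  constructor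
  · positivity
  · rw [div_lt_one (by positivity)]
    linarith

theorem ts_estimator_strongly_consistent_general
    {Ω : Type*} [MeasurableSpace Ω] (P : Measure Ω) [IsProbabilityMeasure P]
    (Θ : Set ℝ) (F : ℝ → ℝ → ℝ) {n p : ℕ}
    (hconn : ∀ θ ∈ Θ, ∀ γ ∈ Set.Ioo (0 : ℝ) 1, ∀ ε > 0,
      γ < F θ (quantile (F θ) γ + ε) ∧ F θ (quantile (F θ) γ - ε) < γ)
    (J : (Fin n → ℝ) → Fin p → ℝ) (hJ : Continuous J)
    (βbar : Fin p → ℝ)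
    (hident : ∀ θ ∈ Θ, βbar ⬝ᵥ J (quantVec F n θ) = θ)
    (θ0 : ℝ) (hθ0 : θ0 ∈ Θ)
    (y : ℕ → Ω → ℝ)
    (hmeas : ∀ i, Measurable (y i))
    (hindep : iIndepFun y P)
    (hcdf : ∀ i x, P {ω | y i ω ≤ x} = ENNReal.ofReal (F θ0 x)) :
    ∀ᵐ ω ∂P,
      Tendsto (fun N : ℕ => βbar ⬝ᵥ J (sampleQuantVec n N fun i => y i ω))
        atTop (𝓝 θ0) := by
  have hlaw : ∀ i, IdentDistrib (y i) (y 0) P P := fun i =>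
    identDistrib_of_forall_measure_le_eq (hmeas i) (hmeas 0) fun x => by rw [hcdf, hcdf]
  have hG : ∀ x, P.real {ω | y 0 ω ≤ x} = max (F θ0 x) 0 := fun x => by
    rw [measureReal_def, hcdf, ENNReal.toReal_ofReal']
  have hae : ∀ᵐ ω ∂P, ∀ r : ℚ, Tendsto (fun N => empiricalCDF N (fun i => y i ω) r) atTop
      (𝓝 (max (F θ0 r) 0)) :=
    ae_all_iff.2 fun r => by simpa only [hG] using ae_tendsto_empiricalCDF hmeas hindep hlaw r
  filter_upwards [hae] with ω hω
  have hquant : Tendsto (fun N => sampleQuantVec n N fun i => y i ω) atTop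
      (𝓝 (quantVec F n θ0)) := tendsto_pi_nhds.2 fun k => by
    have hγ := level_mem_Ioo k
    refine tendsto_orderStat_floor_mul (G := fun x => max (F θ0 x) 0) hγ.1 hγ.2.le
      (fun ε hε => ?_) hω
    obtain ⟨hup, hlo⟩ := hconn θ0 hθ0 _ hγ ε hε
    exact ⟨hup.trans_le (le_max_left _ _), max_lt hlo hγ.1⟩
  have hlim := ((continuous_const.dotProduct hJ : Continuous fun v => βbar ⬝ᵥ J v).tendsto
    (quantVec F n θ0)).comp hquant
  rwa [hident θ0 hθ0] at hlim

/-- Strong consistency of the TS estimator: if `β̄ᵀ J(h^(θ)) = θ` for all `θ ∈ Θ`, the cdfs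
`F θ` are continuous with connected support, and `y 0, y 1, …` are i.i.d. with cdf `F θ₀`
for some `θ₀ ∈ Θ`, then the TS estimate `β̄ᵀ J(h_N(y))` built from the sample quantiles of
the first `N` observations converges almost surely to `θ₀`. -/
theorem ts_estimator_strongly_consistent
    {Ω : Type*} [MeasurableSpace Ω] (P : Measure Ω) [IsProbabilityMeasure P]
    (Θ : Set ℝ) (F : ℝ → ℝ → ℝ) {n p : ℕ} (hn : 1 ≤ n)
    (hcont : ∀ θ ∈ Θ, Continuous (F θ)) (hmono : ∀ θ ∈ Θ, Monotone (F θ))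
    (hconn : ∀ θ ∈ Θ, ∀ γ ∈ Set.Ioo (0 : ℝ) 1, ∀ ε > 0,
      γ < F θ (quantile (F θ) γ + ε) ∧ F θ (quantile (F θ) γ - ε) < γ)
    (J : (Fin n → ℝ) → Fin p → ℝ) (hJ : Continuous J)
    (βbar : Fin p → ℝ)
    (hident : ∀ θ ∈ Θ, βbar ⬝ᵥ J (quantVec F n θ) = θ)
    (θ0 : ℝ) (hθ0 : θ0 ∈ Θ)
    (y : ℕ → Ω → ℝ)
    (hmeas : ∀ i, Measurable (y i))
    (hindep : iIndepFun y P)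
    (hcdf : ∀ i x, P {ω | y i ω ≤ x} = ENNReal.ofReal (F θ0 x)) :
    ∀ᵐ ω ∂P,
      Tendsto (fun N : ℕ => βbar ⬝ᵥ J (sampleQuantVec n N fun i => y i ω))
        atTop (𝓝 θ0) :=
  ts_estimator_strongly_consistent_general P Θ F hconn J hJ βbar hident θ0 hθ0 y hmeas hindep hcdf
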